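/- arXiv:2506.05254 — 4 statements merged into one kernel-verified Lean document; each statement's English description precedes it below -/
import Mathlib

section
/- Let f, g be complex polynomials with f(0) = 0, g(0) = 0, and g'(0) ≠ 0, and suppose g has no multiple roots. Let h be the remainder when f·g' is divided by g(x)/x (so deg h < deg g − 1). Then the sum of f over all roots of g equals −h(0)/g'(0). -/
open Polynomial

open Finset


lemma key {g p : Polynomial ℂ} (hsq : Squarefree g)
    (hd : p.degree + 1 < g.degree) :
    ∑ c ∈ g.roots.toFinset, p.eval c / ((derivative g).eval c) = 0 := by
  classical
  rcases eq_or_ne p 0 with rfl | hp0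
  · simp
  have hg0 : g ≠ 0 := hsq.ne_zero
  have hsep : g.Separable := PerfectField.separable_iff_squarefree.mpr hsq
  have hnodup : g.roots.Nodup := nodup_roots hsep
  have hsplit : g.Splits := IsAlgClosed.splits g
  set s := g.roots.toFinset with hs
  have hval : s.val = g.roots := Multiset.dedup_eq_self.mpr hnodup
  have hcard : #s = g.natDegree := by
    rw [Finset.card_def, hval, (splits_iff_card_roots).mp hsplit]
  have hinj : Set.InjOn id (s : Set ℂ) := fun a _ b _ hab => hab
  have hdn : p.natDegree + 1 < g.natDegree := by
    rw [degree_eq_natDegree hp0, degree_eq_natDegree hg0] at hd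
    exact_mod_cast hd
  have interp : p = Lagrange.interpolate s id (fun i => p.eval (id i)) :=
    Lagrange.eq_interpolate hinj (by
      rw [hcard, degree_eq_natDegree hp0]
      exact_mod_cast Nat.lt_of_succ_lt hdn)
  set w := Lagrange.nodalWeight s id with hw
  have hbasis : ∀ i ∈ s, (Lagrange.basis s id i).coeff (#s - 1) = w i := by
    intro i hi
    rw [Lagrange.basis_eq_prod_sub_inv_mul_nodal_div hi,
      ← Lagrange.nodal_erase_eq_nodal_div hi, coeff_C_mul]
    have hnd : (Lagrange.nodal (s.erase i) id).natDegree = #s - 1 := by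
      rw [Lagrange.natDegree_nodal, card_erase_of_mem hi]
    rw [← hnd, (Lagrange.nodal_monic).coeff_natDegree, mul_one]
  have hsum0 : ∑ i ∈ s, p.eval i * w i = 0 := by
    have h1 := congrArg (fun r => r.coeff (#s - 1)) interp.symm
    simp only [Lagrange.interpolate_apply, finset_sum_coeff, coeff_C_mul] at h1
    rw [Finset.sum_congr rfl (fun i hi => by rw [hbasis i hi, id]), coeff_eq_zero_of_natDegree_lt] at h1
    · exact h1
    · rw [hcard]; omega
  have hlc : g.leadingCoeff ≠ 0 := leadingCoeff_ne_zero.mpr hg0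
  have geq : g = C g.leadingCoeff * Lagrange.nodal s id := by
    conv_lhs => rw [hsplit.eq_prod_roots]
    congr 1
    rw [Lagrange.nodal_eq, Finset.prod_eq_multiset_prod, hval]
    simp
  have hterm : ∀ i ∈ s, p.eval i / (derivative g).eval i = p.eval i * w i * g.leadingCoeff⁻¹ := by
    intro i hi
    have hD : (derivative g).eval i
        = g.leadingCoeff * (derivative (Lagrange.nodal s id)).eval i := by
      conv_lhs => rw [geq]
      rw [derivative_C_mul, eval_mul, eval_C]
    rw [hD, hw, Lagrange.nodalWeight_eq_eval_derivative_nodal hi, div_eq_mul_inv, mul_inv]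
    push_cast [id]
    ring
  rw [Finset.sum_congr rfl hterm, ← Finset.sum_mul, hsum0, zero_mul]

/-- Proposition 2.8 (contour-integral formula): if `f(0) = g(0) = 0`, `g'(0) ≠ 0`,
`g` has no multiple roots, and `h` is the remainder of `f·g'` upon division by `g(x)/x`
(so `deg h < deg(g/x)` and `h ≡ f·g' (mod g/x)`), then the sum of `f` over the roots
of `g` equals `-h(0)/g'(0)`. -/

theorem sum_over_roots_eq {f g h : Polynomial ℂ}
    (hf0 : f.eval 0 = 0) (hg0 : g.eval 0 = 0)
    (hg'0 : (derivative g).eval 0 ≠ 0)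
    (hsq : Squarefree g)
    (hdeg : h.degree < (g /ₘ X).degree)
    (hmod : (g /ₘ X) ∣ (f * derivative g - h)) :
    (g.roots.map (fun c => f.eval c)).sum = -(h.eval 0) / ((derivative g).eval 0) := by
  classical
  set q := g /ₘ X with hq
  have hg0' : g ≠ 0 := by
    intro hg; apply hg'0; rw [hg]; simp
  have hXdvd : X ∣ g := X_dvd_iff.mpr (by rwa [coeff_zero_eq_eval_zero])
  have hgq : g = X * q := by
    have := modByMonic_add_div g X
    rwa [(modByMonic_eq_zero_iff_dvd monic_X).mpr hXdvd, zero_add, eq_comm] at this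
  have hq0 : q ≠ 0 := by intro hq0; rw [hq0, mul_zero] at hgq; exact hg0' hgq
  have hd : h.degree + 1 < g.degree := by
    have h1 : g.degree = q.degree + 1 := by
      rw [hgq, degree_mul, degree_X, add_comm]
    rw [h1]
    rcases eq_or_ne h 0 with rfl | hh0
    · rw [degree_zero, WithBot.bot_add, degree_eq_natDegree hq0]
      exact_mod_cast WithBot.bot_lt_coe (q.natDegree + 1)
    · have hnat : h.natDegree < q.natDegree := natDegree_lt_natDegree hh0 hdeg
      rw [degree_eq_natDegree hh0, degree_eq_natDegree hq0]
      exact_mod_cast Nat.succ_lt_succ hnat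
  have hkey := key hsq hd
  have hsep : g.Separable := PerfectField.separable_iff_squarefree.mpr hsq
  have hnodup : g.roots.Nodup := nodup_roots hsep
  set s := g.roots.toFinset with hs
  have hval : s.val = g.roots := Multiset.dedup_eq_self.mpr hnodup
  have h0mem : (0:ℂ) ∈ s := by
    rw [hs, Multiset.mem_toFinset, mem_roots hg0']; exact hg0
  -- derivative nonzero at each root
  have hder : ∀ c ∈ s, (derivative g).eval c ≠ 0 := by
    intro c hc
    obtain ⟨a, b, hab⟩ := hsep
    have hgc : g.eval c = 0 := by
      rw [hs, Multiset.mem_toFinset, mem_roots hg0'] at hc; exact hc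
    intro hdc
    have := congrArg (eval c) hab
    simp [hgc, hdc] at this
  -- for nonzero roots, h(c) = f(c) * g'(c)
  have hfc : ∀ c ∈ s.erase 0, h.eval c / (derivative g).eval c = f.eval c := by
    intro c hc
    obtain ⟨hc0, hcs⟩ := Finset.mem_erase.mp hc
    have hgc : g.eval c = 0 := by
      rw [hs, Multiset.mem_toFinset, mem_roots hg0'] at hcs; exact hcs
    have hqc : q.eval c = 0 := by
      rw [hgq] at hgc; simp only [eval_mul, eval_X] at hgc
      exact (mul_eq_zero.mp hgc).resolve_left hc0
    obtain ⟨k, hk⟩ := hmod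
    have := congrArg (eval c) hk
    rw [eval_mul, hqc, zero_mul, eval_sub, eval_mul, sub_eq_zero] at this
    rw [← this, mul_div_assoc, div_self (hder c hcs), mul_one]
  -- split the key sum at 0
  rw [← Finset.add_sum_erase s _ h0mem] at hkey
  have hsum : ∑ c ∈ s.erase 0, f.eval c = -(h.eval 0) / (derivative g).eval 0 := by
    rw [← Finset.sum_congr rfl hfc, neg_div]
    linear_combination hkey
  -- the multiset sum equals the finset sum
  have : (g.roots.map (fun c => f.eval c)).sum = ∑ c ∈ s, f.eval c := by
    rw [Finset.sum, hval]
  rw [this, ← Finset.add_sum_erase s _ h0mem, hf0, zero_add, hsum]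
end

section
/- For the sequence of polynomials a_i in ℤ[c] defined by a_1 = c and a_{i+1} = a_i^2 + c, and for positive integers ℓ, s with ℓ ≤ s+1, the identity a_ℓ · ∏_{j=ℓ}^{s} a_j = a_{s+1} − c · ∑_{i=ℓ+1}^{s+1} ∏_{j=i}^{s} a_j holds in ℤ[c], where empty sums are 0 and empty products are 1. -/
open Polynomial Finset

/-- The critical-orbit polynomials: `a 1 = c`, `a (i+1) = (a i)^2 + c`
(so `a i = f_c^i(0)` for `f_c(z) = z^2 + c`). -/
noncomputable def a : ℕ → Polynomial ℤ
  | 0 => 0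
  | n + 1 => (a n) ^ 2 + X

/-- Lemma 3.3: for `1 ≤ ℓ ≤ s+1`,
`a_ℓ · ∏_{j=ℓ}^{s} a_j = a_{s+1} − c · ∑_{i=ℓ+1}^{s+1} ∏_{j=i}^{s} a_j`. -/
theorem a_mul_prod (ℓ s : ℕ) (hℓ : 1 ≤ ℓ) (hs : ℓ ≤ s + 1) :
    a ℓ * ∏ j ∈ Icc ℓ s, a j
      = a (s + 1) - X * ∑ i ∈ Icc (ℓ + 1) (s + 1), ∏ j ∈ Icc i s, a j := by
  induction s with
  | zero =>
    interval_cases ℓ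
    simp [a]
  | succ s ih =>
    rcases eq_or_lt_of_le hs with h | h
    · subst h
      rw [Icc_eq_empty (by omega), Icc_eq_empty (by omega)]
      simp
    · have hs' : ℓ ≤ s + 1 := by omega
      have key := ih hs'
      rw [Finset.prod_Icc_succ_top hs', ← mul_assoc, key, sub_mul]
      have h2 : ∀ i ∈ Icc (ℓ + 1) (s + 1),
          (∏ j ∈ Icc i s, a j) * a (s + 1) = ∏ j ∈ Icc i (s + 1), a j := by
        intro i hi
        simp only [mem_Icc] at hi
        rw [Finset.prod_Icc_succ_top hi.2]
      rw [mul_assoc, sum_mul, Finset.sum_congr rfl h2]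
      have h3 : a (s + 1) * a (s + 1) = a (s + 1 + 1) - X := by
        show _ = (a (s+1))^2 + X - X
        ring
      rw [h3, Finset.sum_Icc_succ_top (by omega : ℓ + 1 ≤ s + 1 + 1)]
      rw [Icc_eq_empty (by omega : ¬ s + 1 + 1 ≤ s + 1), prod_empty]
      ring
end

section
/- For all integers m ≥ 2 and d ≥ 1, the difference (a_{m+d−1} + a_{m−1})^2 − (a_{m+d} + a_m) equals 2·a_{m+d−1}·a_{m−1} − 2c in ℤ[c], and this difference has degree 2^{m+d−2} + 2^{m−2}. -/
open Polynomial

lemma a_monic_deg : ∀ n, 1 ≤ n → (a n).Monic ∧ (a n).natDegree = 2 ^ (n - 1) := by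
  intro n hn
  induction n with
  | zero => omega
  | succ k ih =>
    rcases Nat.eq_or_lt_of_le hn with h | h
    · have hk0 : k = 0 := by omega
      subst hk0
      constructor
      · show ((a 0) ^ 2 + X).Monic
        simp [a, monic_X]
      · show ((a 0) ^ 2 + X).natDegree = 2 ^ 0
        simp [a]
    · have hk : 1 ≤ k := by omega
      obtain ⟨hmon, hdeg⟩ := ih hk
      have hsq : ((a k) ^ 2).Monic := hmon.pow _
      have hsqdeg : ((a k) ^ 2).natDegree = 2 ^ k := by
        rw [hmon.natDegree_pow, hdeg]
        have : k - 1 + 1 = k := by omega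
        rw [← pow_succ', this]
      have hlt : (X : Polynomial ℤ).natDegree < ((a k) ^ 2).natDegree := by
        rw [natDegree_X, hsqdeg]
        have : (2:ℕ)^1 ≤ 2^k := Nat.pow_le_pow_right (by norm_num) hk
        omega
      constructor
      · show ((a k) ^ 2 + X).Monic
        exact hsq.add_of_left (degree_lt_degree hlt)
      · show ((a k) ^ 2 + X).natDegree = 2 ^ (k + 1 - 1)
        rw [natDegree_add_eq_left_of_natDegree_lt hlt, hsqdeg]
        congr 1

/-- For `m ≥ 2`, `d ≥ 1`:
`(a_{m+d−1} + a_{m−1})^2 − (a_{m+d} + a_m) = 2·a_{m+d−1}·a_{m−1} − 2c`,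
and this difference has degree `2^{m+d−2} + 2^{m−2}`. -/
theorem square_diff (m d : ℕ) (hm : 2 ≤ m) (hd : 1 ≤ d) :
    (a (m + d - 1) + a (m - 1)) ^ 2 - (a (m + d) + a m)
        = 2 * a (m + d - 1) * a (m - 1) - 2 * X ∧
    ((a (m + d - 1) + a (m - 1)) ^ 2 - (a (m + d) + a m)).natDegree
        = 2 ^ (m + d - 2) + 2 ^ (m - 2) := by
  have h1 : a (m + d) = (a (m + d - 1)) ^ 2 + X := by
    have : m + d = (m + d - 1) + 1 := by omega
    rw [this]; rfl
  have h2 : a m = (a (m - 1)) ^ 2 + X := by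
    have : m = (m - 1) + 1 := by omega
    rw [this]; rfl
  have heq : (a (m + d - 1) + a (m - 1)) ^ 2 - (a (m + d) + a m)
      = 2 * a (m + d - 1) * a (m - 1) - 2 * X := by
    rw [h1, h2]; ring
  refine ⟨heq, ?_⟩
  rw [heq]
  obtain ⟨hp, hpd⟩ := a_monic_deg (m + d - 1) (by omega)
  obtain ⟨hq, hqd⟩ := a_monic_deg (m - 1) (by omega)
  have hC : (2 : Polynomial ℤ) * a (m + d - 1) * a (m - 1) - 2 * X
      = C 2 * (a (m + d - 1) * a (m - 1) - X) := by
    simp [C_eq_natCast]; ring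
  rw [hC, natDegree_C_mul (by norm_num : (2:ℤ) ≠ 0)]
  have hpq : (a (m + d - 1) * a (m - 1)).natDegree = 2 ^ (m + d - 2) + 2 ^ (m - 2) := by
    rw [natDegree_mul hp.ne_zero hq.ne_zero, hpd, hqd]
    rw [show m+d-1-1 = m+d-2 from by omega, show m-1-1 = m-2 from by omega]
  have hlt : (X : Polynomial ℤ).natDegree < (a (m + d - 1) * a (m - 1)).natDegree := by
    rw [natDegree_X, hpq]
    have h1 : (1:ℕ) ≤ 2 ^ (m + d - 2) := Nat.one_le_two_pow
    have h2 : (1:ℕ) ≤ 2 ^ (m - 2) := Nat.one_le_two_pow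
    omega
  rw [natDegree_sub_eq_left_of_natDegree_lt hlt, hpq]
end

section
/- Let m ≥ 2 and n ≥ 1, and let α be any root of the polynomial a_{m+n−1} + a_{m−1} in ℂ. Then a_{m+n−1}(α) = −a_{m−1}(α), and for all i ≥ 0 and t ≥ 1, a_{m+i+nt}(α) = a_{m+i}(α). -/
open Polynomial

/-- If `α` is a root of `a_{m+n−1} + a_{m−1}`, then `a_{m+n−1}(α) = −a_{m−1}(α)`,
and `a_{m+i+nt}(α) = a_{m+i}(α)` for all `i ≥ 0`, `t ≥ 1`. -/
theorem root_periodicity (m n : ℕ) (hm : 2 ≤ m) (hn : 1 ≤ n) (α : ℂ)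
    (hα : Polynomial.aeval α (a (m + n - 1) + a (m - 1)) = 0) :
    Polynomial.aeval α (a (m + n - 1)) = -Polynomial.aeval α (a (m - 1)) ∧
    ∀ i t : ℕ, 1 ≤ t →
      Polynomial.aeval α (a (m + i + n * t)) = Polynomial.aeval α (a (m + i)) := by
  have key : ∀ k, Polynomial.aeval α (a (k + 1)) = (Polynomial.aeval α (a k)) ^ 2 + α := by
    intro k; simp [a]
  rw [map_add] at hα
  have h1 : Polynomial.aeval α (a (m + n - 1)) = -Polynomial.aeval α (a (m - 1)) :=
    eq_neg_of_add_eq_zero_left hα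
  have h2 : Polynomial.aeval α (a (m + n)) = Polynomial.aeval α (a m) := by
    obtain ⟨p, rfl⟩ : ∃ p, m = p + 1 := ⟨m - 1, by omega⟩
    have e1 : p + 1 + n - 1 = p + n := by omega
    have e2 : p + 1 - 1 = p := by omega
    rw [e1, e2] at h1
    rw [show p + 1 + n = (p + n) + 1 from by ring, key, h1, key]
    ring
  have h3 : ∀ i, Polynomial.aeval α (a (m + i + n)) = Polynomial.aeval α (a (m + i)) := by
    intro i
    induction i with
    | zero => simpa using h2
    | succ i ih =>
        rw [show m + (i + 1) + n = (m + i + n) + 1 from by ring, key, ih,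
          show m + (i + 1) = (m + i) + 1 from by ring, key]
  refine ⟨h1, ?_⟩
  intro i t ht
  induction t with
  | zero => omega
  | succ t ih =>
      rcases Nat.eq_or_lt_of_le ht with h | h
      · rw [← h]; simpa using h3 i
      · have ht' : 1 ≤ t := by omega
        rw [show m + i + n * (t + 1) = m + (i + n * t) + n from by ring, h3,
          show m + (i + n * t) = m + i + n * t from by ring, ih ht']
end
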